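/- There is no triangulation of the 2-sphere with exactly 11 vertices in which every vertex has degree 4 or 5. -/
import Mathlib
set_option linter.unusedSectionVars false
set_option maxHeartbeats 1000000

open Finset

namespace NoEleven

variable {V : Type} [DecidableEq V]

/-- unordered triangle membership -/
def Fc (faces : Finset (Finset V)) (x y z : V) : Prop :=
  ({x, y, z} : Finset V) ∈ faces

lemma Fc_swap23 {faces : Finset (Finset V)} {x y z : V} (h : Fc faces x y z) :
    Fc faces x z y := by
  unfold Fc at *
  rwa [Finset.pair_comm z y]

lemma Fc_swap12 {faces : Finset (Finset V)} {x y z : V} (h : Fc faces x y z) :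
    Fc faces y x z := by
  unfold Fc at *
  rwa [Finset.insert_comm y x]

lemma Fc_rot {faces : Finset (Finset V)} {x y z : V} (h : Fc faces x y z) :
    Fc faces y z x := Fc_swap23 (Fc_swap12 h)

lemma card3_ne {x y z : V} (h : ({x, y, z} : Finset V).card = 3) :
    x ≠ y ∧ x ≠ z ∧ y ≠ z := by
  refine ⟨?_, ?_, ?_⟩ <;> rintro rfl
  · rw [Finset.insert_idem] at h
    have := Finset.card_insert_le x ({z} : Finset V)
    simp at this; omega
  · rw [Finset.insert_comm, Finset.pair_eq_singleton] at h
    have := Finset.card_insert_le y ({x} : Finset V)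
    simp at this; omega
  · rw [Finset.pair_eq_singleton] at h
    have := Finset.card_insert_le x ({y} : Finset V)
    simp at this; omega

lemma Fc_ne {faces : Finset (Finset V)} (hface3 : ∀ F ∈ faces, F.card = 3)
    {x y z : V} (h : Fc faces x y z) : x ≠ y ∧ x ≠ z ∧ y ≠ z :=
  card3_ne (hface3 _ h)

lemma third {faces : Finset (Finset V)} (hface3 : ∀ F ∈ faces, F.card = 3)
    {F : Finset V} {x y : V} (hF : F ∈ faces) (hx : x ∈ F) (hy : y ∈ F)
    (hxy : x ≠ y) : ∃ z, z ≠ x ∧ z ≠ y ∧ F = {x, y, z} := by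
  have h3 := hface3 F hF
  have hyx : y ∈ F.erase x := Finset.mem_erase.2 ⟨hxy.symm, hy⟩
  have h1 : ((F.erase x).erase y).card = 1 := by
    rw [Finset.card_erase_of_mem hyx, Finset.card_erase_of_mem hx, h3]
  obtain ⟨z, hz⟩ := Finset.card_eq_one.mp h1
  have hzmem : z ∈ (F.erase x).erase y := by rw [hz]; exact Finset.mem_singleton_self z
  have hzy : z ≠ y := (Finset.mem_erase.1 hzmem).1
  have hzx : z ≠ x := (Finset.mem_erase.1 (Finset.mem_erase.1 hzmem).2).1
  refine ⟨z, hzx, hzy, ?_⟩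
  rw [← Finset.insert_erase hx, ← Finset.insert_erase hyx, ← hz]



lemma apex {G : SimpleGraph V} {faces : Finset (Finset V)}
    (hface3 : ∀ F ∈ faces, F.card = 3)
    (hedge2 : ∀ x y, G.Adj x y → (faces.filter (fun F => x ∈ F ∧ y ∈ F)).card = 2)
    {x y : V} (h : G.Adj x y) :
    ∃ z w, z ≠ w ∧ z ≠ x ∧ z ≠ y ∧ w ≠ x ∧ w ≠ y ∧
      Fc faces x y z ∧ Fc faces x y w ∧
      ∀ u, Fc faces x y u → u = z ∨ u = w := by
  have hxy : x ≠ y := h.ne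
  obtain ⟨F1, F2, hne, heq⟩ := Finset.card_eq_two.mp (hedge2 x y h)
  have hF1 : F1 ∈ faces.filter (fun F => x ∈ F ∧ y ∈ F) := by
    rw [heq]; exact Finset.mem_insert_self _ _
  have hF2 : F2 ∈ faces.filter (fun F => x ∈ F ∧ y ∈ F) := by
    rw [heq]; exact Finset.mem_insert_of_mem (Finset.mem_singleton_self _)
  rw [Finset.mem_filter] at hF1 hF2
  obtain ⟨z, hzx, hzy, hzeq⟩ := third hface3 hF1.1 hF1.2.1 hF1.2.2 hxy
  obtain ⟨w, hwx, hwy, hweq⟩ := third hface3 hF2.1 hF2.2.1 hF2.2.2 hxy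
  have hzw : z ≠ w := by
    rintro rfl; exact hne (hzeq.trans hweq.symm)
  refine ⟨z, w, hzw, hzx, hzy, hwx, hwy, ?_, ?_, ?_⟩
  · unfold Fc; rw [← hzeq]; exact hF1.1
  · unfold Fc; rw [← hweq]; exact hF2.1
  · intro u hu
    have hune := card3_ne (hface3 _ hu)
    have humem : {x, y, u} ∈ faces.filter (fun F => x ∈ F ∧ y ∈ F) :=
      Finset.mem_filter.2 ⟨hu, by simp, by simp⟩
    rw [heq, Finset.mem_insert, Finset.mem_singleton] at humem
    rcases humem with h1 | h1
    · left
      have : u ∈ ({x, y, z} : Finset V) := by rw [← hzeq, ← h1]; simp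
      simp at this
      rcases this with h2 | h2 | h2
      · exact absurd h2.symm hune.2.1
      · exact absurd h2.symm hune.2.2
      · exact h2
    · right
      have : u ∈ ({x, y, w} : Finset V) := by rw [← hweq, ← h1]; simp
      simp at this
      rcases this with h2 | h2 | h2
      · exact absurd h2.symm hune.2.1
      · exact absurd h2.symm hune.2.2
      · exact h2

lemma Fc_adj {G : SimpleGraph V} {faces : Finset (Finset V)}
    (hface3 : ∀ F ∈ faces, F.card = 3)
    (hclique : ∀ F ∈ faces, ∀ x ∈ F, ∀ y ∈ F, x ≠ y → G.Adj x y)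
    {x y z : V} (h : Fc faces x y z) : G.Adj x y := by
  have hne := Fc_ne hface3 h
  exact hclique _ h x (by simp) y (by simp) hne.1

/-- given one apex of an edge, there is exactly one other -/
lemma other_apex {G : SimpleGraph V} {faces : Finset (Finset V)}
    (hface3 : ∀ F ∈ faces, F.card = 3)
    (hedge2 : ∀ x y, G.Adj x y → (faces.filter (fun F => x ∈ F ∧ y ∈ F)).card = 2)
    {x y p : V} (hadj : G.Adj x y) (hp : Fc faces x y p) :
    ∃ q, q ≠ p ∧ q ≠ x ∧ q ≠ y ∧ Fc faces x y q ∧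
      ∀ u, Fc faces x y u → u = p ∨ u = q := by
  obtain ⟨z, w, hzw, hzx, hzy, hwx, hwy, hz, hw, huniq⟩ := apex hface3 hedge2 hadj
  rcases huniq p hp with rfl | rfl
  · exact ⟨w, hzw.symm, hwx, hwy, hw, fun u hu => (huniq u hu)⟩
  · exact ⟨z, hzw, hzx, hzy, hz, fun u hu => (huniq u hu).symm⟩

/-- two distinct known apexes determine all apexes -/
lemma apex_det {G : SimpleGraph V} {faces : Finset (Finset V)}
    (hface3 : ∀ F ∈ faces, F.card = 3)
    (hclique : ∀ F ∈ faces, ∀ x ∈ F, ∀ y ∈ F, x ≠ y → G.Adj x y)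
    (hedge2 : ∀ x y, G.Adj x y → (faces.filter (fun F => x ∈ F ∧ y ∈ F)).card = 2)
    {x y p q : V} (hp : Fc faces x y p) (hq : Fc faces x y q) (hpq : p ≠ q) :
    ∀ u, Fc faces x y u → u = p ∨ u = q := by
  obtain ⟨q', hq'p, _, _, _, huniq⟩ := other_apex hface3 hedge2 (Fc_adj hface3 hclique hp) hp
  rcases huniq q hq with rfl | rfl
  · exact absurd rfl hpq
  · exact huniq



section WithFintype
variable [Fintype V] {G : SimpleGraph V} [DecidableRel G.Adj]

lemma six_nbrs_false {x p1 p2 p3 p4 p5 p6 : V}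
    (hdeg : G.degree x = 5)
    (a1 : G.Adj x p1) (a2 : G.Adj x p2) (a3 : G.Adj x p3)
    (a4 : G.Adj x p4) (a5 : G.Adj x p5) (a6 : G.Adj x p6)
    (n12 : p1 ≠ p2) (n13 : p1 ≠ p3) (n14 : p1 ≠ p4) (n15 : p1 ≠ p5) (n16 : p1 ≠ p6)
    (n23 : p2 ≠ p3) (n24 : p2 ≠ p4) (n25 : p2 ≠ p5) (n26 : p2 ≠ p6)
    (n34 : p3 ≠ p4) (n35 : p3 ≠ p5) (n36 : p3 ≠ p6)
    (n45 : p4 ≠ p5) (n46 : p4 ≠ p6) (n56 : p5 ≠ p6) : False := by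
  have hsub : ({p1, p2, p3, p4, p5, p6} : Finset V) ⊆ G.neighborFinset x := by
    intro t ht
    simp only [Finset.mem_insert, Finset.mem_singleton] at ht
    rw [SimpleGraph.mem_neighborFinset]
    rcases ht with rfl | rfl | rfl | rfl | rfl | rfl <;> assumption
  have hcard : ({p1, p2, p3, p4, p5, p6} : Finset V).card = 6 := by
    rw [Finset.card_insert_of_notMem (by simp [n12, n13, n14, n15, n16]),
        Finset.card_insert_of_notMem (by simp [n23, n24, n25, n26]),
        Finset.card_insert_of_notMem (by simp [n34, n35, n36]),
        Finset.card_insert_of_notMem (by simp [n45, n46]),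
        Finset.card_insert_of_notMem (by simp [n56]),
        Finset.card_singleton]
  have := Finset.card_le_card hsub
  rw [hcard, G.card_neighborFinset_eq_degree, hdeg] at this
  omega

lemma nbrs_eq_five {x p1 p2 p3 p4 p5 : V}
    (hdeg : G.degree x = 5)
    (a1 : G.Adj x p1) (a2 : G.Adj x p2) (a3 : G.Adj x p3)
    (a4 : G.Adj x p4) (a5 : G.Adj x p5)
    (n12 : p1 ≠ p2) (n13 : p1 ≠ p3) (n14 : p1 ≠ p4) (n15 : p1 ≠ p5)
    (n23 : p2 ≠ p3) (n24 : p2 ≠ p4) (n25 : p2 ≠ p5)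
    (n34 : p3 ≠ p4) (n35 : p3 ≠ p5) (n45 : p4 ≠ p5) :
    ∀ y, G.Adj x y → y = p1 ∨ y = p2 ∨ y = p3 ∨ y = p4 ∨ y = p5 := by
  have hsub : ({p1, p2, p3, p4, p5} : Finset V) ⊆ G.neighborFinset x := by
    intro t ht
    simp only [Finset.mem_insert, Finset.mem_singleton] at ht
    rw [SimpleGraph.mem_neighborFinset]
    rcases ht with rfl | rfl | rfl | rfl | rfl <;> assumption
  have hcard : ({p1, p2, p3, p4, p5} : Finset V).card = 5 := by
    rw [Finset.card_insert_of_notMem (by simp [n12, n13, n14, n15]),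
        Finset.card_insert_of_notMem (by simp [n23, n24, n25]),
        Finset.card_insert_of_notMem (by simp [n34, n35]),
        Finset.card_insert_of_notMem (by simp [n45]),
        Finset.card_singleton]
  have heq : ({p1, p2, p3, p4, p5} : Finset V) = G.neighborFinset x := by
    apply Finset.eq_of_subset_of_card_le hsub
    rw [hcard, G.card_neighborFinset_eq_degree, hdeg]
  intro y hy
  have : y ∈ ({p1, p2, p3, p4, p5} : Finset V) := by
    rw [heq, SimpleGraph.mem_neighborFinset]; exact hy
  simpa using this

lemma nbrs_eq_four {x p1 p2 p3 p4 : V}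
    (hdeg : G.degree x = 4)
    (a1 : G.Adj x p1) (a2 : G.Adj x p2) (a3 : G.Adj x p3) (a4 : G.Adj x p4)
    (n12 : p1 ≠ p2) (n13 : p1 ≠ p3) (n14 : p1 ≠ p4)
    (n23 : p2 ≠ p3) (n24 : p2 ≠ p4) (n34 : p3 ≠ p4) :
    ∀ y, G.Adj x y → y = p1 ∨ y = p2 ∨ y = p3 ∨ y = p4 := by
  have hsub : ({p1, p2, p3, p4} : Finset V) ⊆ G.neighborFinset x := by
    intro t ht
    simp only [Finset.mem_insert, Finset.mem_singleton] at ht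
    rw [SimpleGraph.mem_neighborFinset]
    rcases ht with rfl | rfl | rfl | rfl <;> assumption
  have hcard : ({p1, p2, p3, p4} : Finset V).card = 4 := by
    rw [Finset.card_insert_of_notMem (by simp [n12, n13, n14]),
        Finset.card_insert_of_notMem (by simp [n23, n24]),
        Finset.card_insert_of_notMem (by simp [n34]),
        Finset.card_singleton]
  have heq : ({p1, p2, p3, p4} : Finset V) = G.neighborFinset x := by
    apply Finset.eq_of_subset_of_card_le hsub
    rw [hcard, G.card_neighborFinset_eq_degree, hdeg]
  intro y hy
  have : y ∈ ({p1, p2, p3, p4} : Finset V) := by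
    rw [heq, SimpleGraph.mem_neighborFinset]; exact hy
  simpa using this

lemma exists_extra {x : V} {s : Finset V}
    (hs : s ⊆ G.neighborFinset x) (h : s.card < G.degree x) :
    ∃ c, G.Adj x c ∧ c ∉ s := by
  have hss : s ⊂ G.neighborFinset x := by
    refine Finset.ssubset_iff_subset_ne.2 ⟨hs, ?_⟩
    intro heq
    rw [heq, G.card_neighborFinset_eq_degree] at h
    omega
  obtain ⟨c, hc, hcs⟩ := Finset.exists_of_ssubset hss
  exact ⟨c, (SimpleGraph.mem_neighborFinset _ _ _).1 hc, hcs⟩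


lemma triangle_link {faces : Finset (Finset V)}
    (hface3 : ∀ F ∈ faces, F.card = 3)
    (hclique : ∀ F ∈ faces, ∀ x ∈ F, ∀ y ∈ F, x ≠ y → G.Adj x y)
    (hedge2 : ∀ x y, G.Adj x y → (faces.filter (fun F => x ∈ F ∧ y ∈ F)).card = 2)
    {c α β γ : V} (hαβ : α ≠ β) (hαγ : α ≠ γ) (hβγ : β ≠ γ)
    (hcα : G.Adj c α) (hcβ : G.Adj c β) (hcγ : G.Adj c γ)
    (hdeg : G.degree c = 5)
    (Uα : ∀ z, Fc faces c α z → z = β ∨ z = γ)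
    (Uβ : ∀ z, Fc faces c β z → z = α ∨ z = γ)
    (Uγ : ∀ z, Fc faces c γ z → z = α ∨ z = β) : False := by
  have hsub : ({α, β, γ} : Finset V) ⊆ G.neighborFinset c := by
    intro t ht
    simp only [Finset.mem_insert, Finset.mem_singleton] at ht
    rw [SimpleGraph.mem_neighborFinset]
    rcases ht with rfl | rfl | rfl <;> assumption
  have hcard : ({α, β, γ} : Finset V).card = 3 := by
    rw [Finset.card_insert_of_notMem (by simp [hαβ, hαγ]),
        Finset.card_insert_of_notMem (by simp [hβγ]), Finset.card_singleton]
  obtain ⟨d, hcd, hd3⟩ := exists_extra hsub (by rw [hcard, hdeg]; omega)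
  simp only [Finset.mem_insert, Finset.mem_singleton] at hd3
  push_neg at hd3
  obtain ⟨hdα, hdβ, hdγ⟩ := hd3
  have hsub2 : ({α, β, γ, d} : Finset V) ⊆ G.neighborFinset c := by
    intro t ht
    simp only [Finset.mem_insert, Finset.mem_singleton] at ht
    rw [SimpleGraph.mem_neighborFinset]
    rcases ht with rfl | rfl | rfl | rfl <;> assumption
  have hcard2 : ({α, β, γ, d} : Finset V).card = 4 := by
    rw [Finset.card_insert_of_notMem (by simp [hαβ, hαγ, Ne.symm hdα]),
        Finset.card_insert_of_notMem (by simp [hβγ, Ne.symm hdβ]),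
        Finset.card_insert_of_notMem (by simp [Ne.symm hdγ]),
        Finset.card_singleton]
  have h1 : (G.neighborFinset c \ ({α, β, γ, d} : Finset V)).card = 1 := by
    rw [Finset.card_sdiff_of_subset hsub2, G.card_neighborFinset_eq_degree, hdeg, hcard2]
  obtain ⟨e, he⟩ := Finset.card_eq_one.mp h1
  obtain ⟨z, w, hzw, hzc, hzd, hwc, hwd, hz, hw, _⟩ := apex hface3 hedge2 hcd
  have key : ∀ u, Fc faces c d u → u ≠ c → u ≠ d → u = e := by
    intro u hu huc hud
    have hadjcu : G.Adj c u := Fc_adj hface3 hclique (Fc_swap23 hu)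
    have huα : u ≠ α := by
      rintro rfl
      rcases Uα d (Fc_swap23 hu) with h | h
      exacts [hdβ h, hdγ h]
    have huβ : u ≠ β := by
      rintro rfl
      rcases Uβ d (Fc_swap23 hu) with h | h
      exacts [hdα h, hdγ h]
    have huγ : u ≠ γ := by
      rintro rfl
      rcases Uγ d (Fc_swap23 hu) with h | h
      exacts [hdα h, hdβ h]
    have : u ∈ G.neighborFinset c \ ({α, β, γ, d} : Finset V) := by
      rw [Finset.mem_sdiff, SimpleGraph.mem_neighborFinset]
      exact ⟨hadjcu, by simp [huα, huβ, huγ, hud]⟩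
    rw [he] at this
    simpa using this
  have hze := key z hz hzc hzd
  have hwe := key w hw hwc hwd
  exact hzw (hze.trans hwe.symm)
lemma no_diag {faces : Finset (Finset V)}
    (hface3 : ∀ F ∈ faces, F.card = 3)
    (hclique : ∀ F ∈ faces, ∀ x ∈ F, ∀ y ∈ F, x ≠ y → G.Adj x y)
    (hedge2 : ∀ x y, G.Adj x y → (faces.filter (fun F => x ∈ F ∧ y ∈ F)).card = 2)
    {a b1 b2 b3 b4 : V}
    (na1 : a ≠ b1) (na2 : a ≠ b2) (na3 : a ≠ b3) (na4 : a ≠ b4)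
    (n12 : b1 ≠ b2) (n13 : b1 ≠ b3) (n14 : b1 ≠ b4)
    (n23 : b2 ≠ b3) (n24 : b2 ≠ b4) (n34 : b3 ≠ b4)
    (F12 : Fc faces a b1 b2) (F23 : Fc faces a b2 b3)
    (F34 : Fc faces a b3 b4) (F41 : Fc faces a b4 b1)
    (d1 : G.degree b1 = 5) (d2 : G.degree b2 = 5) (d4 : G.degree b4 = 5) :
    ¬ G.Adj b1 b3 := by
  intro hadj
  have U2 : ∀ u, Fc faces a b2 u → u = b1 ∨ u = b3 :=
    apex_det hface3 hclique hedge2 (Fc_swap23 F12) F23 n13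
  have U4 : ∀ u, Fc faces a b4 u → u = b3 ∨ u = b1 :=
    apex_det hface3 hclique hedge2 (Fc_swap23 F34) F41 (Ne.symm n13)
  obtain ⟨u, v, huv, hu1, hu3, hv1, hv3, Fu, Fv, _⟩ := apex hface3 hedge2 hadj
  have hne_a : ∀ t, Fc faces b1 b3 t → t ≠ a := by
    rintro t ht rfl
    rcases apex_det hface3 hclique hedge2 F12 (Fc_swap23 F41) n24 b3
        (Fc_rot (Fc_rot ht)) with h | h
    exacts [n23 h.symm, n34 h]
  have hne_b2 : ∀ t, Fc faces b1 b3 t → t ≠ b2 := by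
    rintro t ht rfl
    refine triangle_link hface3 hclique hedge2 na1 na3 n13
      (Fc_adj hface3 hclique (Fc_rot (Fc_rot F12)))
      (Fc_adj hface3 hclique (Fc_swap23 (Fc_rot (Fc_rot F12))))
      (Fc_adj hface3 hclique (Fc_rot F23)) d2 ?_ ?_ ?_
    · intro z hz
      exact U2 z (Fc_swap12 hz)
    · exact apex_det hface3 hclique hedge2
        (Fc_swap23 (Fc_rot (Fc_rot F12))) (Fc_rot (Fc_rot ht)) na3
    · exact apex_det hface3 hclique hedge2
        (Fc_rot F23) (Fc_swap12 (Fc_rot ht)) na1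
  have hne_b4 : ∀ t, Fc faces b1 b3 t → t ≠ b4 := by
    rintro t ht rfl
    refine triangle_link hface3 hclique hedge2 na3 na1 (Ne.symm n13)
      (Fc_adj hface3 hclique (Fc_swap12 F41))
      (Fc_adj hface3 hclique (Fc_swap12 (Fc_rot F34)))
      (Fc_adj hface3 hclique (Fc_rot F41)) d4 ?_ ?_ ?_
    · intro z hz
      exact U4 z (Fc_swap12 hz)
    · exact apex_det hface3 hclique hedge2
        (Fc_swap12 (Fc_rot F34)) (Fc_swap12 (Fc_rot ht)) na1
    · exact apex_det hface3 hclique hedge2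
        (Fc_rot F41) (Fc_rot (Fc_rot ht)) na3
  exact six_nbrs_false (G := G) d1
    (Fc_adj hface3 hclique (Fc_swap12 F12))
    (Fc_adj hface3 hclique (Fc_rot F12))
    (Fc_adj hface3 hclique (Fc_swap12 (Fc_rot F41)))
    hadj
    (Fc_adj hface3 hclique (Fc_swap23 Fu))
    (Fc_adj hface3 hclique (Fc_swap23 Fv))
    na2 na4 na3 (Ne.symm (hne_a u Fu)) (Ne.symm (hne_a v Fv))
    n24 n23 (Ne.symm (hne_b2 u Fu)) (Ne.symm (hne_b2 v Fv))
    (Ne.symm n34) (Ne.symm (hne_b4 u Fu)) (Ne.symm (hne_b4 v Fv))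
    (Ne.symm hu3) (Ne.symm hv3) huv

lemma ring_vertex {faces : Finset (Finset V)}
    (hface3 : ∀ F ∈ faces, F.card = 3)
    (hclique : ∀ F ∈ faces, ∀ x ∈ F, ∀ y ∈ F, x ≠ y → G.Adj x y)
    (hedge2 : ∀ x y, G.Adj x y → (faces.filter (fun F => x ∈ F ∧ y ∈ F)).card = 2)
    {a b p n xp xn : V}
    (dB : G.degree b = 5)
    (hpn : p ≠ n) (hap : a ≠ p) (han : a ≠ n)
    (Fab : Fc faces a b p)
    (Uab : ∀ u, Fc faces a b u → u = p ∨ u = n)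
    (Fpb : Fc faces p b xp) (Upb : ∀ u, Fc faces p b u → u = a ∨ u = xp)
    (Fbn : Fc faces b n xn) (Ubn : ∀ u, Fc faces b n u → u = a ∨ u = xn)
    (hxpa : xp ≠ a) (hxpp : xp ≠ p) (hxpn : xp ≠ n)
    (hxna : xn ≠ a) (hxnn : xn ≠ n) (hxnp : xn ≠ p) :
    xp ≠ xn ∧ Fc faces b xp xn ∧
      (∀ y, G.Adj b y → y = a ∨ y = p ∨ y = n ∨ y = xp ∨ y = xn) := by
  have hba : G.Adj b a := Fc_adj hface3 hclique (Fc_swap12 Fab)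
  have hbp : G.Adj b p := Fc_adj hface3 hclique (Fc_rot Fab)
  have hbn : G.Adj b n := Fc_adj hface3 hclique Fbn
  have hbxp : G.Adj b xp := Fc_adj hface3 hclique (Fc_rot Fpb)
  have hbxn : G.Adj b xn := Fc_adj hface3 hclique (Fc_swap23 Fbn)
  have hxpxn : xp ≠ xn := by
    rintro rfl
    have hsub : ({a, p, n, xp} : Finset V) ⊆ G.neighborFinset b := by
      intro t ht
      simp only [Finset.mem_insert, Finset.mem_singleton] at ht
      rw [SimpleGraph.mem_neighborFinset]
      rcases ht with rfl | rfl | rfl | rfl <;> assumption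
    have hcard : ({a, p, n, xp} : Finset V).card = 4 := by
      rw [Finset.card_insert_of_notMem (by simp [hap, han, Ne.symm hxpa]),
          Finset.card_insert_of_notMem (by simp [hpn, Ne.symm hxpp]),
          Finset.card_insert_of_notMem (by simp [Ne.symm hxpn]),
          Finset.card_singleton]
    obtain ⟨w, hbw, hw4⟩ := exists_extra hsub (by rw [hcard, dB]; omega)
    simp only [Finset.mem_insert, Finset.mem_singleton] at hw4
    push_neg at hw4
    obtain ⟨hwa, hwp, hwn, hwxp⟩ := hw4
    have Nb := nbrs_eq_five dB hba hbp hbn hbxp hbw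
      hap han (Ne.symm hxpa) (Ne.symm hwa) hpn (Ne.symm hxpp) (Ne.symm hwp)
      (Ne.symm hxpn) (Ne.symm hwn) (Ne.symm hwxp)
    obtain ⟨z, z', hzz', hzb, hzw, _, _, hz, _, _⟩ := apex hface3 hedge2 hbw
    have hbz : G.Adj b z := Fc_adj hface3 hclique (Fc_swap23 hz)
    rcases Nb z hbz with rfl | rfl | rfl | rfl | rfl
    · rcases Uab w (Fc_rot (Fc_rot hz)) with h | h
      exacts [hwp h, hwn h]
    · rcases Upb w (Fc_swap12 (Fc_swap23 hz)) with h | h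
      exacts [hwa h, hwxp h]
    · rcases Ubn w (Fc_swap23 hz) with h | h
      exacts [hwa h, hwxp h]
    · rcases apex_det hface3 hclique hedge2 (Fc_rot Fpb) (Fc_swap23 Fbn) hpn w
        (Fc_swap23 hz) with h | h
      exacts [hwp h, hwn h]
    · exact hzw rfl
  have Nb := nbrs_eq_five dB hba hbp hbn hbxp hbxn
    hap han (Ne.symm hxpa) (Ne.symm hxna) hpn (Ne.symm hxpp) (Ne.symm hxnp)
    (Ne.symm hxpn) (Ne.symm hxnn) hxpxn
  refine ⟨hxpxn, ?_, Nb⟩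
  obtain ⟨q, hqn, hqb, hqxn, hq, _⟩ :=
    other_apex hface3 hedge2 hbxn (Fc_swap23 Fbn)
  have hbq : G.Adj b q := Fc_adj hface3 hclique (Fc_swap23 hq)
  rcases Nb q hbq with rfl | rfl | rfl | rfl | rfl
  · rcases Uab xn (Fc_rot (Fc_rot hq)) with h | h
    exacts [absurd h hxnp, absurd h hxnn]
  · rcases Upb xn (Fc_swap12 (Fc_swap23 hq)) with h | h
    exacts [absurd h hxna, absurd h.symm hxpxn]
  · exact absurd rfl hqn
  · exact Fc_swap23 hq
  · exact absurd rfl hqxn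

end WithFintype

end NoEleven

open NoEleven

/-- There is no triangulation of the 2-sphere with exactly 11 vertices
in which every vertex has degree 4 or 5. -/
theorem no_eleven_vertex_triangulation
    {V : Type} [Fintype V] [DecidableEq V] (G : SimpleGraph V) [DecidableRel G.Adj]
    (faces : Finset (Finset V))
    (hface3 : ∀ F ∈ faces, F.card = 3)
    (hclique : ∀ F ∈ faces, ∀ x ∈ F, ∀ y ∈ F, x ≠ y → G.Adj x y)
    (hedge2 : ∀ x y, G.Adj x y → (faces.filter (fun F => x ∈ F ∧ y ∈ F)).card = 2)
    (heuler : (Fintype.card V : ℤ) - (G.edgeFinset.card : ℤ) + (faces.card : ℤ) = 2)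
    (htri : 2 * G.edgeFinset.card = 3 * faces.card)
    (hconn : G.Connected)
    (hvfaces : ∀ x : V, (faces.filter (fun F => x ∈ F)).card = G.degree x)
    (hdeg : ∀ x, G.degree x = 4 ∨ G.degree x = 5) :
    Fintype.card V ≠ 11 := by
  intro hv
  -- ### Counting: exactly one vertex of degree 4
  have he27 : G.edgeFinset.card = 27 := by rw [hv] at heuler; omega
  have hsum : ∑ x, G.degree x = 54 := by
    rw [SimpleGraph.sum_degrees_eq_twice_card_edges, he27]
  have hcard4 : (Finset.univ.filter (fun x => G.degree x = 4)).card = 1 := by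
    have hsplit := Finset.sum_filter_add_sum_filter_not Finset.univ
      (fun x => G.degree x = 4) (fun x => G.degree x)
    have h1 : ∑ x ∈ Finset.univ.filter (fun x => G.degree x = 4), G.degree x
        = 4 * (Finset.univ.filter (fun x => G.degree x = 4)).card := by
      rw [Finset.sum_congr rfl (fun x hx => (Finset.mem_filter.1 hx).2),
        Finset.sum_const, smul_eq_mul, mul_comm]
    have h2 : ∑ x ∈ Finset.univ.filter (fun x => ¬ G.degree x = 4), G.degree x
        = 5 * (Finset.univ.filter (fun x => ¬ G.degree x = 4)).card := by
      rw [Finset.sum_congr rfl (fun x hx => ?_), Finset.sum_const, smul_eq_mul, mul_comm]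
      rcases hdeg x with h | h
      · exact absurd h (Finset.mem_filter.1 hx).2
      · exact h
    have h3 := Finset.card_filter_add_card_filter_not
      (s := Finset.univ) (p := fun x => G.degree x = 4)
    rw [Finset.card_univ, hv] at h3
    rw [h1, h2, hsum] at hsplit
    omega
  obtain ⟨a, ha⟩ := Finset.card_eq_one.mp hcard4
  have dega : G.degree a = 4 := by
    have : a ∈ Finset.univ.filter (fun x => G.degree x = 4) := by
      rw [ha]; exact Finset.mem_singleton_self a
    exact (Finset.mem_filter.1 this).2
  have deg5 : ∀ x, x ≠ a → G.degree x = 5 := by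
    intro x hx
    rcases hdeg x with h | h
    · exfalso; apply hx
      have : x ∈ Finset.univ.filter (fun x => G.degree x = 4) :=
        Finset.mem_filter.2 ⟨Finset.mem_univ x, h⟩
      rw [ha] at this; simpa using this
    · exact h
  -- ### The star of a
  have hNne : (G.neighborFinset a).Nonempty := by
    rw [← Finset.card_pos, G.card_neighborFinset_eq_degree, dega]; omega
  obtain ⟨b1, hb1⟩ := hNne
  have hab1 : G.Adj a b1 := (SimpleGraph.mem_neighborFinset _ _ _).1 hb1
  obtain ⟨b2, b4, hb24, h2a, h2b1, h4a, h4b1, F12, F14, U1⟩ :=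
    apex hface3 hedge2 hab1
  have hab2 : G.Adj a b2 := Fc_adj hface3 hclique (Fc_swap23 F12)
  have hab4 : G.Adj a b4 := Fc_adj hface3 hclique (Fc_swap23 F14)
  obtain ⟨b3, hb3b1, hb3a, hb3b2, F23, U2⟩ :=
    other_apex hface3 hedge2 hab2 (Fc_swap23 F12)
  have hab3 : G.Adj a b3 := Fc_adj hface3 hclique (Fc_swap23 F23)
  have hb3b4 : b3 ≠ b4 := by
    intro h34
    rw [← h34] at F14 U1 h4a h4b1 hb24
    -- now F14 : Fc a b1 b3 etc.
    have hsub : ({b1, b2, b3} : Finset V) ⊆ G.neighborFinset a := by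
      intro t ht
      simp only [Finset.mem_insert, Finset.mem_singleton] at ht
      rw [SimpleGraph.mem_neighborFinset]
      rcases ht with rfl | rfl | rfl <;> assumption
    have hcard : ({b1, b2, b3} : Finset V).card = 3 := by
      rw [Finset.card_insert_of_notMem (by simp [Ne.symm h2b1, Ne.symm hb3b1]),
          Finset.card_insert_of_notMem (by simp [Ne.symm hb3b2]), Finset.card_singleton]
    obtain ⟨c, hac, hc3⟩ := exists_extra hsub (by rw [hcard, dega]; omega)
    simp only [Finset.mem_insert, Finset.mem_singleton] at hc3
    push_neg at hc3
    obtain ⟨hcb1, hcb2, hcb3⟩ := hc3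
    have Na := nbrs_eq_four dega hab1 hab2 hab3 hac
      (Ne.symm h2b1) (Ne.symm hb3b1) (Ne.symm hcb1)
      (Ne.symm hb3b2) (Ne.symm hcb2) (Ne.symm hcb3)
    obtain ⟨z, z', hzz', hza, hzc, _, _, hz, _, _⟩ := apex hface3 hedge2 hac
    have haz : G.Adj a z := Fc_adj hface3 hclique (Fc_swap23 hz)
    rcases Na z haz with rfl | rfl | rfl | rfl
    · rcases U1 c (Fc_swap23 hz) with h | h
      exacts [hcb2 h, hcb3 h]
    · rcases U2 c (Fc_swap23 hz) with h | h
      exacts [hcb1 h, hcb3 h]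
    · rcases apex_det hface3 hclique hedge2 (Fc_swap23 F23) (Fc_swap23 F14)
        h2b1 c (Fc_swap23 hz) with h | h
      exacts [hcb2 h, hcb1 h]
    · exact hzc rfl
  -- pairwise distinctness of the star
  have na1 : a ≠ b1 := hab1.ne
  have na2 : a ≠ b2 := hab2.ne
  have na3 : a ≠ b3 := Ne.symm hb3a
  have na4 : a ≠ b4 := hab4.ne
  have n12 : b1 ≠ b2 := Ne.symm h2b1
  have n13 : b1 ≠ b3 := Ne.symm hb3b1
  have n14 : b1 ≠ b4 := Ne.symm h4b1
  have n23 : b2 ≠ b3 := Ne.symm hb3b2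
  have n24 : b2 ≠ b4 := hb24
  have n34 : b3 ≠ b4 := hb3b4
  have Na := nbrs_eq_four dega hab1 hab2 hab3 hab4 n12 n13 n14 n23 n24 n34
  -- the fourth face at a
  obtain ⟨z4, hz4b2, hz4a, hz4b3, hzF, U3'⟩ :=
    other_apex hface3 hedge2 hab3 (Fc_swap23 F23)
  have haz4 : G.Adj a z4 := Fc_adj hface3 hclique (Fc_swap23 hzF)
  have hz4 : z4 = b4 := by
    rcases Na z4 haz4 with rfl | rfl | rfl | rfl
    · exfalso
      rcases U1 b3 (Fc_swap23 hzF) with h | h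
      exacts [n23 h.symm, n34 h]
    · exact absurd rfl hz4b2
    · exact absurd rfl hz4b3
    · rfl
  rw [hz4] at hzF U3'
  have F34 : Fc faces a b3 b4 := hzF
  have U3 : ∀ u, Fc faces a b3 u → u = b2 ∨ u = b4 := U3'
  have U4 : ∀ u, Fc faces a b4 u → u = b3 ∨ u = b1 :=
    apex_det hface3 hclique hedge2 (Fc_swap23 F34) (Fc_swap23 F14) (Ne.symm n13)
  -- degrees
  have d1 : G.degree b1 = 5 := deg5 b1 (Ne.symm na1)
  have d2 : G.degree b2 = 5 := deg5 b2 (Ne.symm na2)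
  have d3 : G.degree b3 = 5 := deg5 b3 (Ne.symm na3)
  have d4 : G.degree b4 = 5 := deg5 b4 (Ne.symm na4)
  -- no diagonals
  have F41 : Fc faces a b4 b1 := Fc_swap23 F14
  have diag13 : ¬ G.Adj b1 b3 :=
    no_diag hface3 hclique hedge2 na1 na2 na3 na4 n12 n13 n14 n23 n24 n34
      F12 F23 F34 F41 d1 d2 d4
  have diag24 : ¬ G.Adj b2 b4 :=
    no_diag hface3 hclique hedge2 na2 na3 na4 na1 n23 n24 (Ne.symm n12)
      n34 (Ne.symm n13) (Ne.symm n14) F23 F34 F41 F12 d2 d3 d1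
  -- ring vertices x1 x2 x3 x4
  have adj12 : G.Adj b1 b2 := Fc_adj hface3 hclique (Fc_rot F12)
  have adj23 : G.Adj b2 b3 := Fc_adj hface3 hclique (Fc_rot F23)
  have adj34 : G.Adj b3 b4 := Fc_adj hface3 hclique (Fc_rot F34)
  have adj41 : G.Adj b4 b1 := Fc_adj hface3 hclique (Fc_rot F41)
  obtain ⟨x1, hx1a, hx1b1, hx1b2, Fx1, U12⟩ :=
    other_apex hface3 hedge2 adj12 (Fc_rot F12)
  obtain ⟨x2, hx2a, hx2b2, hx2b3, Fx2, U23⟩ :=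
    other_apex hface3 hedge2 adj23 (Fc_rot F23)
  obtain ⟨x3, hx3a, hx3b3, hx3b4, Fx3, U34⟩ :=
    other_apex hface3 hedge2 adj34 (Fc_rot F34)
  obtain ⟨x4, hx4a, hx4b4, hx4b1, Fx4, U41⟩ :=
    other_apex hface3 hedge2 adj41 (Fc_rot F41)
  -- ring vertices avoid the star
  have hx1b3 : x1 ≠ b3 := by
    rintro rfl; exact diag13 (Fc_adj hface3 hclique (Fc_swap23 Fx1))
  have hx1b4 : x1 ≠ b4 := by
    rintro rfl; exact diag24 (Fc_adj hface3 hclique (Fc_rot Fx1))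
  have hx2b4 : x2 ≠ b4 := by
    rintro rfl; exact diag24 (Fc_adj hface3 hclique (Fc_swap23 Fx2))
  have hx2b1 : x2 ≠ b1 := by
    rintro rfl
    exact diag13 (Fc_adj hface3 hclique (Fc_rot Fx2)).symm
  have hx3b1 : x3 ≠ b1 := by
    rintro rfl
    exact diag13 (Fc_adj hface3 hclique (Fc_swap23 Fx3)).symm
  have hx3b2 : x3 ≠ b2 := by
    rintro rfl
    exact diag24 (Fc_adj hface3 hclique (Fc_rot Fx3)).symm
  have hx4b2 : x4 ≠ b2 := by
    rintro rfl
    exact diag24 (Fc_adj hface3 hclique (Fc_swap23 Fx4)).symm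
  have hx4b3 : x4 ≠ b3 := by
    rintro rfl
    exact diag13 (Fc_adj hface3 hclique (Fc_rot Fx4))
  -- neighborhoods of the ring
  obtain ⟨hx41, Fb1x, N1⟩ := ring_vertex hface3 hclique hedge2 d1
    (Ne.symm n24) na4 na2 F14 (fun u h => (U1 u h).symm) Fx4 U41 Fx1 U12
    hx4a hx4b4 hx4b2 hx1a hx1b2 hx1b4
  obtain ⟨hx12, Fb2x, N2⟩ := ring_vertex hface3 hclique hedge2 d2
    n13 na1 na3 (Fc_swap23 F12) U2 Fx1 U12 Fx2 U23
    hx1a hx1b1 hx1b3 hx2a hx2b3 hx2b1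
  obtain ⟨hx23, Fb3x, N3⟩ := ring_vertex hface3 hclique hedge2 d3
    n24 na2 na4 (Fc_swap23 F23) U3 Fx2 U23 Fx3 U34
    hx2a hx2b2 hx2b4 hx3a hx3b4 hx3b2
  obtain ⟨hx34, Fb4x, N4⟩ := ring_vertex hface3 hclique hedge2 d4
    (Ne.symm n13) na3 na1 (Fc_swap23 F34) U4 Fx3 U34 Fx4 U41
    hx3a hx3b3 hx3b1 hx4a hx4b1 hx4b3
  -- adjacencies of ring vertices
  have ax1b1 : G.Adj x1 b1 := Fc_adj hface3 hclique (Fc_rot (Fc_rot Fx1))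
  have ax1b2 : G.Adj x1 b2 := Fc_adj hface3 hclique (Fc_swap23 (Fc_rot (Fc_rot Fx1)))
  have ax2b2 : G.Adj x2 b2 := Fc_adj hface3 hclique (Fc_rot (Fc_rot Fx2))
  have ax2b3 : G.Adj x2 b3 := Fc_adj hface3 hclique (Fc_swap23 (Fc_rot (Fc_rot Fx2)))
  have ax3b3 : G.Adj x3 b3 := Fc_adj hface3 hclique (Fc_rot (Fc_rot Fx3))
  have ax3b4 : G.Adj x3 b4 := Fc_adj hface3 hclique (Fc_swap23 (Fc_rot (Fc_rot Fx3)))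
  have ax4b4 : G.Adj x4 b4 := Fc_adj hface3 hclique (Fc_rot (Fc_rot Fx4))
  have ax4b1 : G.Adj x4 b1 := Fc_adj hface3 hclique (Fc_swap23 (Fc_rot (Fc_rot Fx4)))
  -- ring edges
  have ax1x2 : G.Adj x1 x2 := Fc_adj hface3 hclique (Fc_rot Fb2x)
  have ax2x3 : G.Adj x2 x3 := Fc_adj hface3 hclique (Fc_rot Fb3x)
  have ax3x4 : G.Adj x3 x4 := Fc_adj hface3 hclique (Fc_rot Fb4x)
  have ax4x1 : G.Adj x4 x1 := Fc_adj hface3 hclique (Fc_rot Fb1x)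
  have dx1 : G.degree x1 = 5 := deg5 x1 hx1a
  have dx2 : G.degree x2 = 5 := deg5 x2 hx2a
  -- ### case analysis on coincidences of opposite ring vertices
  by_cases h13 : x1 = x3 <;> by_cases h24 : x2 = x4
  · -- x1 = x3 and x2 = x4 : the inner square degenerates
    rw [← h13] at Fx3 hx3a hx3b3 hx3b4 hx3b1 hx3b2 ax3b3 ax3b4 N3 N4
    rw [← h24] at Fx4 hx4a hx4b4 hx4b1 hx4b2 hx4b3 ax4b4 ax4b1 N1 N4
    have Nx1 := nbrs_eq_five dx1 ax1b1 ax1b2 ax3b3 ax3b4 ax1x2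
      n12 n13 n14 (Ne.symm hx2b1) n23 n24 (Ne.symm hx2b2) n34
      (Ne.symm hx2b3) (Ne.symm hx2b4)
    have Nx2 := nbrs_eq_five dx2 ax4b1 ax2b2 ax2b3 ax4b4 ax1x2.symm
      n12 n13 n14 (Ne.symm hx1b1) n23 n24 (Ne.symm hx1b2) n34
      (Ne.symm hx1b3) (Ne.symm hx1b4)
    set T : Finset V := {a, b1, b2, b3, b4, x1, x2} with hT
    have hTcard : T.card = 7 := by
      rw [hT,
        Finset.card_insert_of_notMem
          (by simp [na1, na2, na3, na4, Ne.symm hx1a, Ne.symm hx2a]),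
        Finset.card_insert_of_notMem
          (by simp [n12, n13, n14, Ne.symm hx1b1, Ne.symm hx2b1]),
        Finset.card_insert_of_notMem
          (by simp [n23, n24, Ne.symm hx1b2, Ne.symm hx2b2]),
        Finset.card_insert_of_notMem (by simp [n34, Ne.symm hx1b3, Ne.symm hx2b3]),
        Finset.card_insert_of_notMem (by simp [Ne.symm hx1b4, Ne.symm hx2b4]),
        Finset.card_insert_of_notMem (by simp [hx12]),
        Finset.card_singleton]
    have hTc : (Tᶜ : Finset V).Nonempty := by
      rw [← Finset.card_pos, Finset.card_compl, hTcard, hv]; omega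
    obtain ⟨p, hp⟩ := hTc
    rw [Finset.mem_compl, hT] at hp
    simp only [Finset.mem_insert, Finset.mem_singleton] at hp
    push_neg at hp
    obtain ⟨hpa, hpb1, hpb2, hpb3, hpb4, hpx1, hpx2⟩ := hp
    have dp : G.degree p = 5 := deg5 p hpa
    have hsubp : G.neighborFinset p ⊆ (insert p T)ᶜ := by
      intro y hy
      rw [SimpleGraph.mem_neighborFinset] at hy
      rw [Finset.mem_compl, Finset.mem_insert, hT]
      simp only [Finset.mem_insert, Finset.mem_singleton]
      push_neg
      refine ⟨fun h => (h ▸ hy).ne rfl, fun h => ?_, fun h => ?_, fun h => ?_,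
        fun h => ?_, fun h => ?_, fun h => ?_, fun h => ?_⟩
      · subst h; rcases Na p hy.symm with rfl | rfl | rfl | rfl
        exacts [hpb1 rfl, hpb2 rfl, hpb3 rfl, hpb4 rfl]
      · subst h; rcases N1 p hy.symm with rfl | rfl | rfl | rfl | rfl
        exacts [hpa rfl, hpb4 rfl, hpb2 rfl, hpx2 rfl, hpx1 rfl]
      · subst h; rcases N2 p hy.symm with rfl | rfl | rfl | rfl | rfl
        exacts [hpa rfl, hpb1 rfl, hpb3 rfl, hpx1 rfl, hpx2 rfl]
      · subst h; rcases N3 p hy.symm with rfl | rfl | rfl | rfl | rfl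
        exacts [hpa rfl, hpb2 rfl, hpb4 rfl, hpx2 rfl, hpx1 rfl]
      · subst h; rcases N4 p hy.symm with rfl | rfl | rfl | rfl | rfl
        exacts [hpa rfl, hpb3 rfl, hpb1 rfl, hpx1 rfl, hpx2 rfl]
      · subst h; rcases Nx1 p hy.symm with rfl | rfl | rfl | rfl | rfl
        exacts [hpb1 rfl, hpb2 rfl, hpb3 rfl, hpb4 rfl, hpx2 rfl]
      · subst h; rcases Nx2 p hy.symm with rfl | rfl | rfl | rfl | rfl
        exacts [hpb1 rfl, hpb2 rfl, hpb3 rfl, hpb4 rfl, hpx1 rfl]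
    have hcardT' : (insert p T).card = 8 := by
      rw [Finset.card_insert_of_notMem
        (by rw [hT]; simp [hpa, hpb1, hpb2, hpb3, hpb4, hpx1, hpx2]), hTcard]
    have := Finset.card_le_card hsubp
    rw [Finset.card_compl, hcardT', hv, G.card_neighborFinset_eq_degree, dp] at this
    omega
  · -- x1 = x3, x2 ≠ x4
    rw [← h13] at Fx3 ax3b3 ax3b4
    exact six_nbrs_false dx1 ax1b1 ax1b2 ax3b3 ax3b4 ax1x2 ax4x1.symm
      n12 n13 n14 (Ne.symm hx2b1) (Ne.symm hx4b1)
      n23 n24 (Ne.symm hx2b2) (Ne.symm hx4b2)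
      n34 (Ne.symm hx2b3) (Ne.symm hx4b3)
      (Ne.symm hx2b4) (Ne.symm hx4b4) h24
  · -- x2 = x4, x1 ≠ x3
    rw [← h24] at Fx4 ax4b4 ax4b1
    exact six_nbrs_false dx2 ax4b1 ax2b2 ax2b3 ax4b4 ax1x2.symm ax2x3
      n12 n13 n14 (Ne.symm hx1b1) (Ne.symm hx3b1)
      n23 n24 (Ne.symm hx1b2) (Ne.symm hx3b2)
      n34 (Ne.symm hx1b3) (Ne.symm hx3b3)
      (Ne.symm hx1b4) (Ne.symm hx3b4) h13
  · -- main case: all ring vertices distinct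
    set S : Finset V := {a, b1, b2, b3, b4, x1, x2, x3, x4} with hS
    have hScard : S.card = 9 := by
      rw [hS,
        Finset.card_insert_of_notMem (by
          simp [na1, na2, na3, na4, Ne.symm hx1a, Ne.symm hx2a,
            Ne.symm hx3a, Ne.symm hx4a]),
        Finset.card_insert_of_notMem (by
          simp [n12, n13, n14, Ne.symm hx1b1, Ne.symm hx2b1,
            Ne.symm hx3b1, Ne.symm hx4b1]),
        Finset.card_insert_of_notMem (by
          simp [n23, n24, Ne.symm hx1b2, Ne.symm hx2b2,
            Ne.symm hx3b2, Ne.symm hx4b2]),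
        Finset.card_insert_of_notMem (by
          simp [n34, Ne.symm hx1b3, Ne.symm hx2b3, Ne.symm hx3b3, Ne.symm hx4b3]),
        Finset.card_insert_of_notMem (by
          simp [Ne.symm hx1b4, Ne.symm hx2b4, Ne.symm hx3b4, Ne.symm hx4b4]),
        Finset.card_insert_of_notMem (by simp [hx12, h13, Ne.symm hx41]),
        Finset.card_insert_of_notMem (by simp [hx23, h24]),
        Finset.card_insert_of_notMem (by simp [hx34]),
        Finset.card_singleton]
    have hSc2 : (Sᶜ : Finset V).card = 2 := by
      rw [Finset.card_compl, hScard, hv]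
    obtain ⟨p, q, hpq, hSc⟩ := Finset.card_eq_two.mp hSc2
    have hpS : p ∉ S := by
      rw [← Finset.mem_compl, hSc]; exact Finset.mem_insert_self _ _
    have hqS : q ∉ S := by
      rw [← Finset.mem_compl, hSc]
      exact Finset.mem_insert_of_mem (Finset.mem_singleton_self _)
    rw [hS] at hpS hqS
    simp only [Finset.mem_insert, Finset.mem_singleton] at hpS hqS
    push_neg at hpS hqS
    obtain ⟨hpa, hpb1, hpb2, hpb3, hpb4, hpx1, hpx2, hpx3, hpx4⟩ := hpS
    obtain ⟨hqa, hqb1, hqb2, hqb3, hqb4, hqx1, hqx2, hqx3, hqx4⟩ := hqS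
    -- both p and q are adjacent to x1
    have key : ∀ r, r ≠ a → r ≠ b1 → r ≠ b2 → r ≠ b3 → r ≠ b4 →
        r ≠ x1 → r ≠ x2 → r ≠ x3 → r ≠ x4 → G.Adj r x1 := by
      intro r hra hrb1 hrb2 hrb3 hrb4 hrx1 hrx2 hrx3 hrx4
      have dr : G.degree r = 5 := deg5 r hra
      have hrS : r ∉ S := by
        rw [hS]
        simp only [Finset.mem_insert, Finset.mem_singleton]
        push_neg
        exact ⟨hra, hrb1, hrb2, hrb3, hrb4, hrx1, hrx2, hrx3, hrx4⟩
      have hsubr : G.neighborFinset r ⊆ {x1, x2, x3, x4} ∪ (Sᶜ \ {r}) := by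
        intro y hy
        rw [SimpleGraph.mem_neighborFinset] at hy
        by_cases hyS : y ∈ S
        · rw [hS] at hyS
          simp only [Finset.mem_insert, Finset.mem_singleton] at hyS
          rcases hyS with rfl | rfl | rfl | rfl | rfl | rfl | rfl | rfl | rfl
          · exfalso; rcases Na r hy.symm with rfl | rfl | rfl | rfl
            exacts [hrb1 rfl, hrb2 rfl, hrb3 rfl, hrb4 rfl]
          · exfalso; rcases N1 r hy.symm with rfl | rfl | rfl | rfl | rfl
            exacts [hra rfl, hrb4 rfl, hrb2 rfl, hrx4 rfl, hrx1 rfl]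
          · exfalso; rcases N2 r hy.symm with rfl | rfl | rfl | rfl | rfl
            exacts [hra rfl, hrb1 rfl, hrb3 rfl, hrx1 rfl, hrx2 rfl]
          · exfalso; rcases N3 r hy.symm with rfl | rfl | rfl | rfl | rfl
            exacts [hra rfl, hrb2 rfl, hrb4 rfl, hrx2 rfl, hrx3 rfl]
          · exfalso; rcases N4 r hy.symm with rfl | rfl | rfl | rfl | rfl
            exacts [hra rfl, hrb3 rfl, hrb1 rfl, hrx3 rfl, hrx4 rfl]
          · exact Finset.mem_union_left _ (by simp)
          · exact Finset.mem_union_left _ (by simp)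
          · exact Finset.mem_union_left _ (by simp)
          · exact Finset.mem_union_left _ (by simp)
        · refine Finset.mem_union_right _ ?_
          rw [Finset.mem_sdiff, Finset.mem_compl, Finset.mem_singleton]
          exact ⟨hyS, hy.ne'⟩
      have hcardU : ({x1, x2, x3, x4} ∪ (Sᶜ \ {r}) : Finset V).card ≤ 5 := by
        refine le_trans (Finset.card_union_le _ _) ?_
        have h1 : ({x1, x2, x3, x4} : Finset V).card ≤ 4 := by
          refine le_trans (Finset.card_insert_le _ _) ?_
          refine Nat.succ_le_succ (le_trans (Finset.card_insert_le _ _) ?_)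
          refine Nat.succ_le_succ (le_trans (Finset.card_insert_le _ _) ?_)
          simp
        have h2 : ((Sᶜ \ {r} : Finset V)).card ≤ 1 := by
          have : r ∈ (Sᶜ : Finset V) := Finset.mem_compl.2 hrS
          have := Finset.card_sdiff_of_subset (Finset.singleton_subset_iff.2 this)
          rw [this, hSc2]; simp
        omega
      -- so N(r) has exactly the 5 elements x1..x4 and the other outer vertex
      have hNr : (G.neighborFinset r).card = 5 := by
        rw [G.card_neighborFinset_eq_degree, dr]
      have heq : G.neighborFinset r = {x1, x2, x3, x4} ∪ (Sᶜ \ {r}) := by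
        apply Finset.eq_of_subset_of_card_le hsubr
        rw [hNr]; exact hcardU
      have : x1 ∈ G.neighborFinset r := by rw [heq]; simp
      exact (SimpleGraph.mem_neighborFinset _ _ _).1 this
    have apx1 : G.Adj p x1 := key p hpa hpb1 hpb2 hpb3 hpb4 hpx1 hpx2 hpx3 hpx4
    have aqx1 : G.Adj q x1 := key q hqa hqb1 hqb2 hqb3 hqb4 hqx1 hqx2 hqx3 hqx4
    exact six_nbrs_false dx1 ax1b1 ax1b2 ax1x2 ax4x1.symm apx1.symm aqx1.symm
      n12 (Ne.symm hx2b1) (Ne.symm hx4b1) (Ne.symm hpb1) (Ne.symm hqb1)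
      (Ne.symm hx2b2) (Ne.symm hx4b2) (Ne.symm hpb2) (Ne.symm hqb2)
      h24 (Ne.symm hpx2) (Ne.symm hqx2)
      (Ne.symm hpx4) (Ne.symm hqx4) hpq
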